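/- arXiv:1506.03170 — 4 statements merged into one kernel-verified Lean document; each statement's English description precedes it below -/
import Mathlib

section
/- For every orientation D of a graph G with chromatic number 3, there is a proper 3-coloring f of G such that D contains a directed path of order 3 whose three vertices receive three distinct colors. -/
/-!
Suppose no proper 3-colouring has a rainbow directed path of order 3, and call a vertex a
transit vertex if it has both an in- and an out-neighbour. Around a transit vertex `v` every
in-neighbour gets the colour of every out-neighbour, so all neighbours of `v` share one colour.
Two adjacent transit vertices `a → b` are then impossible: recolouring `a` with the third colour
keeps the colouring proper and makes `a → b → o` rainbow for any out-neighbour `o` of `b`.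
Hence the transit vertices are independent and colouring sources `0`, transit vertices `2` and
the remaining vertices `1` is proper; a path `a → m → b` through a transit vertex `m` is rainbow
for it.
If there is no transit vertex at all, sources versus the rest is a proper 2-colouring.
-/

namespace OrientedGraph

variable {V α : Type*} {G : SimpleGraph V} {D : V → V → Prop}

def IsTransit (D : V → V → Prop) (v : V) : Prop :=
  (∃ u, D u v) ∧ ∃ w, D v w

def HasRainbowPath (D : V → V → Prop) (f : V → α) : Prop :=
  ∃ a b c, D a b ∧ D b c ∧ f a ≠ f b ∧ f b ≠ f c ∧ f a ≠ f c

theorem apply_eq_of_isTransit_of_not_hasRainbowPath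
    (hD : ∀ u v, G.Adj u v ↔ D u v ∨ D v u) {f : V → α}
    (hf : ∀ u v, G.Adj u v → f u ≠ f v) (hR : ¬ HasRainbowPath D f)
    {v p q : V} (hv : IsTransit D v)
    (hp : G.Adj v p) (hq : G.Adj v q) : f p = f q := by
  have across : ∀ x y, D x v → D v y → f x = f y := fun x y hx hy => by
    by_contra hxy
    exact hR ⟨x, v, y, hx, hy, hf x v ((hD x v).2 (.inl hx)), hf v y ((hD v y).2 (.inl hy)),
      hxy⟩
  obtain ⟨⟨i, hi⟩, o, ho⟩ := hv
  rcases (hD v p).1 hp with hp | hp <;> rcases (hD v q).1 hq with hq | hq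
  · exact (across i p hi hp).symm.trans (across i q hi hq)
  · exact (across q p hq hp).symm
  · exact across p q hp hq
  · exact (across p o hp ho).trans (across q o hq ho).symm

theorem update_apply_ne_of_adj [DecidableEq V] {f : V → α}
    (hf : ∀ u v, G.Adj u v → f u ≠ f v) {a : V} {z : α}
    (hz : ∀ w, G.Adj a w → f w ≠ z) :
    ∀ u v, G.Adj u v → Function.update f a z u ≠ Function.update f a z v := by
  intro u v huv
  rcases eq_or_ne u a with rfl | hu
  · rw [Function.update_self, Function.update_of_ne huv.ne.symm]
    exact (hz v huv).symm
  rcases eq_or_ne v a with rfl | hv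
  · rw [Function.update_self, Function.update_of_ne hu]
    exact hz u huv.symm
  rw [Function.update_of_ne hu, Function.update_of_ne hv]
  exact hf u v huv

theorem exists_hasRainbowPath_of_isTransit_of_isTransit
    (hD : ∀ u v, G.Adj u v ↔ D u v ∨ D v u) (hanti : ∀ u v, ¬ (D u v ∧ D v u))
    {f₀ : V → Fin 3} (hf₀ : ∀ u v, G.Adj u v → f₀ u ≠ f₀ v) {a b : V}
    (ha : IsTransit D a) (hb : IsTransit D b) (hab : D a b) :
    ∃ f : V → Fin 3, (∀ u v, G.Adj u v → f u ≠ f v) ∧ HasRainbowPath D f := by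
  classical
  by_cases hR : HasRainbowPath D f₀
  · exact ⟨f₀, hf₀, hR⟩
  have hadj : G.Adj a b := (hD a b).2 (.inl hab)
  have hab_ne : f₀ a ≠ f₀ b := hf₀ a b hadj
  obtain ⟨z, hza, hzb⟩ : ∃ z : Fin 3, z ≠ f₀ a ∧ z ≠ f₀ b := by
    revert hab_ne; generalize f₀ a = x; generalize f₀ b = y; revert x y; decide
  have hnbr_a : ∀ w, G.Adj a w → f₀ w = f₀ b := fun w hw =>
    apply_eq_of_isTransit_of_not_hasRainbowPath hD hf₀ hR ha hw hadj
  refine ⟨Function.update f₀ a z,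
    update_apply_ne_of_adj hf₀ fun w hw => hnbr_a w hw ▸ hzb.symm, ?_⟩
  obtain ⟨o, hbo⟩ := hb.2
  have hoa : o ≠ a := by rintro rfl; exact hanti o b ⟨hab, hbo⟩
  have hba : b ≠ a := hadj.ne.symm
  have hfo : f₀ o = f₀ a :=
    apply_eq_of_isTransit_of_not_hasRainbowPath hD hf₀ hR hb ((hD b o).2 (.inl hbo)) hadj.symm
  refine ⟨a, b, o, hab, hbo, ?_⟩
  simp only [Function.update_self, Function.update_of_ne hba, Function.update_of_ne hoa, hfo]
  exact ⟨hzb, hab_ne.symm, hza⟩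

open Classical in
noncomputable def transitColoring (D : V → V → Prop) (v : V) : Fin 3 :=
  if IsTransit D v then 2 else if ∃ u, D u v then 1 else 0

theorem transitColoring_ne_of_rel (hind : ∀ a b, D a b → IsTransit D a → ¬ IsTransit D b)
    {u v : V} (huv : D u v) : transitColoring D u ≠ transitColoring D v := by
  have hv_in : ∃ x, D x v := ⟨u, huv⟩
  by_cases hu : IsTransit D u
  · have hv : ¬ IsTransit D v := hind u v huv hu
    simp [transitColoring, hu, hv, hv_in]
  · have hu_in : ¬ ∃ x, D x u := fun h => hu ⟨h, v, huv⟩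
    by_cases hv : IsTransit D v <;> simp [transitColoring, hu, hu_in, hv, hv_in]

theorem transitColoring_ne_of_adj (hD : ∀ u v, G.Adj u v ↔ D u v ∨ D v u)
    (hind : ∀ a b, D a b → IsTransit D a → ¬ IsTransit D b) :
    ∀ u v, G.Adj u v → transitColoring D u ≠ transitColoring D v := fun u v huv =>
  ((hD u v).1 huv).elim (transitColoring_ne_of_rel hind) fun h =>
    (transitColoring_ne_of_rel hind h).symm

theorem hasRainbowPath_transitColoring
    (hind : ∀ a b, D a b → IsTransit D a → ¬ IsTransit D b) {m : V} (hm : IsTransit D m) :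
    HasRainbowPath D (transitColoring D) := by
  have ⟨⟨a, ham⟩, b, hmb⟩ := hm
  have ha : ¬ ∃ x, D x a := fun h => hind a m ham ⟨h, m, ham⟩ hm
  have hb : ¬ IsTransit D b := hind m b hmb hm
  have ha' : ¬ IsTransit D a := fun h => ha h.1
  refine ⟨a, m, b, ham, hmb, ?_⟩
  simp [transitColoring, ha, ha', hm, hb, show ∃ x, D x b from ⟨m, hmb⟩]

theorem colorable_two_of_forall_not_isTransit (hD : ∀ u v, G.Adj u v ↔ D u v ∨ D v u)
    (h : ∀ v, ¬ IsTransit D v) : G.Colorable 2 := by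
  classical
  have hsrc : ∀ u v, D u v →
      (if ∃ x, D x u then (1 : Fin 2) else 0) ≠ if ∃ x, D x v then 1 else 0 := by
    intro u v huv
    have hu : ¬ ∃ x, D x u := fun hu => h u ⟨hu, v, huv⟩
    simp [hu, show ∃ x, D x v from ⟨u, huv⟩]
  exact ⟨.mk _ fun {u v} huv =>
    ((hD u v).1 huv).elim (hsrc u v) fun h' => (hsrc v u h').symm⟩

end OrientedGraph

open OrientedGraph in
theorem stmt2_general {V : Type*} (G : SimpleGraph V) (D : V → V → Prop)
    (horient₁ : ∀ u v : V, G.Adj u v ↔ (D u v ∨ D v u))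
    (horient₂ : ∀ u v : V, ¬ (D u v ∧ D v u))
    (hchrom : G.chromaticNumber = 3) :
    ∃ f : V → Fin 3,
      (∀ u v : V, G.Adj u v → f u ≠ f v) ∧
      ∃ a b c : V, D a b ∧ D b c ∧ f a ≠ f b ∧ f b ≠ f c ∧ f a ≠ f c := by
  obtain ⟨f₀⟩ : G.Colorable 3 := SimpleGraph.chromaticNumber_le_iff_colorable.1 hchrom.le
  by_cases hT : ∃ m, IsTransit D m
  · by_cases hadj : ∃ a b, D a b ∧ IsTransit D a ∧ IsTransit D b
    · obtain ⟨a, b, hab, ha, hb⟩ := hadj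
      exact exists_hasRainbowPath_of_isTransit_of_isTransit horient₁ horient₂
        (fun _ _ h => f₀.valid h) ha hb hab
    · have hind : ∀ a b, D a b → IsTransit D a → ¬ IsTransit D b := fun a b hab ha hb =>
        hadj ⟨a, b, hab, ha, hb⟩
      obtain ⟨m, hm⟩ := hT
      exact ⟨transitColoring D, transitColoring_ne_of_adj horient₁ hind,
        hasRainbowPath_transitColoring hind hm⟩
  · have h2 :=
      (colorable_two_of_forall_not_isTransit horient₁ (not_exists.1 hT)).chromaticNumber_le
    rw [hchrom] at h2
    exact absurd h2 (by norm_num)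

/-- For every orientation `D` of a graph `G` of chromatic number `3`, there is a
proper `3`-coloring `f` of `G` such that `D` contains a directed path of order `3`
whose three vertices receive three distinct colors. -/
theorem stmt2 {V : Type*} [Fintype V] (G : SimpleGraph V) (D : V → V → Prop)
    (horient₁ : ∀ u v : V, G.Adj u v ↔ (D u v ∨ D v u))
    (horient₂ : ∀ u v : V, ¬ (D u v ∧ D v u))
    (hchrom : G.chromaticNumber = 3) :
    ∃ f : V → Fin 3,
      (∀ u v : V, G.Adj u v → f u ≠ f v) ∧
      ∃ a b c : V, D a b ∧ D b c ∧ f a ≠ f b ∧ f b ≠ f c ∧ f a ≠ f c :=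
  stmt2_general G D horient₁ horient₂ hchrom
end

section
/- Let G be a graph with proper k-coloring f, let D_f be the digraph with arcs (u,v) for edges uv with f(v) ≡ f(u)+1 (mod k), and let X ⊆ V(G). Let V_f^+(X) be the set of vertices reachable in D_f by a directed path from some vertex of X (including X itself). Then the function f_X^+ defined by f_X^+(u) = f(u)+1 (mod k) for u ∈ V_f^+(X) and f_X^+(u) = f(u) otherwise is again a proper k-coloring of G. -/
/-! Shifting the colors of a set `S` by `c` can only create a conflict on an edge `uv` with
`u ∈ S`, `v ∉ S` and `f v = f u + c`, i.e. along an arc of `D_f` leaving `S`. The set of vertices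
reachable from `X` has no such outgoing arc. -/

theorem adj_ne_of_shift_on_forwardClosed {V R : Type*} [AddGroup R] (G : SimpleGraph V)
    (f : V → R) (hf : ∀ u v : V, G.Adj u v → f u ≠ f v) (c : R) (S : Set V)
    (hS : ∀ u v : V, u ∈ S → G.Adj u v → f v = f u + c → v ∈ S) (g : V → R)
    (hg₁ : ∀ u ∈ S, g u = f u + c) (hg₂ : ∀ u ∉ S, g u = f u) :
    ∀ u v : V, G.Adj u v → g u ≠ g v := by
  intro u v huv
  by_cases hu : u ∈ S <;> by_cases hv : v ∈ S
  · rw [hg₁ u hu, hg₁ v hv]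
    exact fun h => hf u v huv (add_right_cancel h)
  · rw [hg₁ u hu, hg₂ v hv]
    exact fun h => hv (hS u v hu huv h.symm)
  · rw [hg₂ u hu, hg₁ v hv]
    exact fun h => hu (hS v u hv huv.symm h)
  · rw [hg₂ u hu, hg₂ v hv]
    exact hf u v huv

/-- Let `f` be a proper coloring of `G` with colors in `ZMod k`, let `D_f` have arcs
`(u,v)` for edges `uv` with `f v = f u + 1`, and let `X ⊆ V`. If `g` agrees with
`f + 1` on the set `V_f^+(X)` of vertices reachable in `D_f` from `X` (reachability
includes trivial paths) and with `f` elsewhere, then `g` is again a proper coloring. -/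
theorem stmt4 {V : Type*} (G : SimpleGraph V) (k : ℕ)
    (f : V → ZMod k) (hf : ∀ u v : V, G.Adj u v → f u ≠ f v)
    (X : Set V) (g : V → ZMod k)
    (hg₁ : ∀ u : V,
      (∃ x ∈ X, Relation.ReflTransGen (fun a b => G.Adj a b ∧ f b = f a + 1) x u) →
      g u = f u + 1)
    (hg₂ : ∀ u : V,
      ¬ (∃ x ∈ X, Relation.ReflTransGen (fun a b => G.Adj a b ∧ f b = f a + 1) x u) →
      g u = f u) :
    ∀ u v : V, G.Adj u v → g u ≠ g v := by
  refine adj_ne_of_shift_on_forwardClosed G f hf 1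
    {u | ∃ x ∈ X, Relation.ReflTransGen (fun a b => G.Adj a b ∧ f b = f a + 1) x u}
    ?_ g hg₁ hg₂
  rintro u v ⟨x, hx, hxu⟩ huv hfuv
  exact ⟨x, hx, hxu.tail ⟨huv, hfuv⟩⟩
end

section
/- Let G be a graph with proper k-coloring f, let D_f be the digraph with arcs (u,v) for edges uv with f(v) ≡ f(u)+1 (mod k), and let X ⊆ V(G). Let V_f^-(X) be the set of vertices y such that D_f contains a directed path from y to some vertex of X. Then the function f_X^- defined by f_X^-(u) = f(u)-1 (mod k) for u ∈ V_f^-(X) and f_X^-(u) = f(u) otherwise is again a proper k-coloring of G. -/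
/-!
Lowering the colours on a set `S` by one can only create a conflict on an edge `uv` with
`u ∈ S`, `v ∉ S` and `f u - 1 = f v`, i.e. on an arc `v → u` of `D_f` entering `S` from outside.
The set `V_f^-(X)` is closed under taking in-neighbours in `D_f`, so no such arc exists.
-/

section ShiftDown

variable {V R : Type*} [AddGroupWithOne R] (G : SimpleGraph V) (f : V → R) (S : Set V)

theorem sub_one_ne_of_adj_of_mem_of_notMem
    (hS : ∀ a b, G.Adj a b → f b = f a + 1 → b ∈ S → a ∈ S)
    {u v : V} (huv : G.Adj u v) (hu : u ∈ S) (hv : v ∉ S) : f u - 1 ≠ f v :=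
  fun h => hv (hS v u huv.symm (eq_add_of_sub_eq h) hu)

theorem ne_of_adj_of_sub_one_on_predClosed (hf : ∀ u v, G.Adj u v → f u ≠ f v)
    (hS : ∀ a b, G.Adj a b → f b = f a + 1 → b ∈ S → a ∈ S)
    (g : V → R) (hg₁ : ∀ u ∈ S, g u = f u - 1) (hg₂ : ∀ u ∉ S, g u = f u) :
    ∀ u v, G.Adj u v → g u ≠ g v := by
  intro u v huv
  by_cases hu : u ∈ S <;> by_cases hv : v ∈ S
  · rw [hg₁ u hu, hg₁ v hv]
    exact fun h => hf u v huv (sub_left_injective h)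
  · rw [hg₁ u hu, hg₂ v hv]
    exact sub_one_ne_of_adj_of_mem_of_notMem G f S hS huv hu hv
  · rw [hg₂ u hu, hg₁ v hv]
    exact (sub_one_ne_of_adj_of_mem_of_notMem G f S hS huv.symm hv hu).symm
  · rw [hg₂ u hu, hg₂ v hv]
    exact hf u v huv

end ShiftDown

/-- Let `f` be a proper coloring of `G` with colors in `ZMod k`, let `D_f` have arcs
`(u,v)` for edges `uv` with `f v = f u + 1`, and let `X ⊆ V`. If `g` agrees with
`f - 1` on the set `V_f^-(X)` of vertices from which some vertex of `X` is reachable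
in `D_f` (reachability includes trivial paths) and with `f` elsewhere, then `g` is
again a proper coloring. -/
theorem stmt5 {V : Type*} (G : SimpleGraph V) (k : ℕ)
    (f : V → ZMod k) (hf : ∀ u v : V, G.Adj u v → f u ≠ f v)
    (X : Set V) (g : V → ZMod k)
    (hg₁ : ∀ u : V,
      (∃ x ∈ X, Relation.ReflTransGen (fun a b => G.Adj a b ∧ f b = f a + 1) u x) →
      g u = f u - 1)
    (hg₂ : ∀ u : V,
      ¬ (∃ x ∈ X, Relation.ReflTransGen (fun a b => G.Adj a b ∧ f b = f a + 1) u x) →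
      g u = f u) :
    ∀ u v : V, G.Adj u v → g u ≠ g v :=
  ne_of_adj_of_sub_one_on_predClosed G f
    {u | ∃ x ∈ X, Relation.ReflTransGen (fun a b => G.Adj a b ∧ f b = f a + 1) u x} hf
    (fun _ _ hab hf_ab ⟨x, hx, hpath⟩ => ⟨x, hx, hpath.head ⟨hab, hf_ab⟩⟩) g hg₁ hg₂
end

section
/- Let D be an orientation of a triangle-free graph G with chromatic number 3, and suppose the set R of vertices of D with positive in-degree and positive out-degree is an independent set in G. Then the function f assigning color 1 to sources (in-degree 0 vertices), color 2 to vertices of R, and color 3 to sinks (out-degree 0 vertices) is a proper 3-coloring of G, and every vertex of R lies on a directed path of order 3 with three distinct colors. -/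
/-! The tail of an arc is a source (colour 1) or lies in `R` (colour 2), and its head lies in
`R` or is a sink (colour 3). So an arc can only be monochromatic if it joins two vertices of
`R`, which independence forbids; for the same reason an in-neighbour and an out-neighbour of a
vertex of `R` are a source and a sink, giving the colours 1, 2, 3 along the path. -/

namespace Orientation

variable {V : Type*} {D : V → V → Prop} {f : V → ℕ} {a b : V}

/-- The set `R` of vertices with positive in-degree and positive out-degree. -/
def IsInner (D : V → V → Prop) (u : V) : Prop :=
  (∃ x, D x u) ∧ ∃ y, D u y

theorem color_tail_of_arc (hf₁ : ∀ u, (¬ ∃ x, D x u) → f u = 1)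
    (hf₂ : ∀ u, IsInner D u → f u = 2) (hab : D a b) :
    f a = 1 ∨ (IsInner D a ∧ f a = 2) := by
  by_cases hin : ∃ x, D x a
  · exact Or.inr ⟨⟨hin, b, hab⟩, hf₂ a ⟨hin, b, hab⟩⟩
  · exact Or.inl (hf₁ a hin)

theorem color_head_of_arc (hf₂ : ∀ u, IsInner D u → f u = 2)
    (hf₃ : ∀ u, (¬ ∃ y, D u y) → f u = 3) (hab : D a b) :
    f b = 3 ∨ (IsInner D b ∧ f b = 2) := by
  by_cases hout : ∃ y, D b y
  · exact Or.inr ⟨⟨⟨a, hab⟩, hout⟩, hf₂ b ⟨⟨a, hab⟩, hout⟩⟩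
  · exact Or.inl (hf₃ b hout)

section

variable (hR : ∀ u v, IsInner D u → IsInner D v → ¬ D u v)
  (hf₁ : ∀ u, (¬ ∃ x, D x u) → f u = 1) (hf₂ : ∀ u, IsInner D u → f u = 2)
  (hf₃ : ∀ u, (¬ ∃ y, D u y) → f u = 3)
include hR hf₁ hf₂ hf₃

theorem color_ne_of_arc (hab : D a b) : f a ≠ f b := by
  rcases color_tail_of_arc hf₁ hf₂ hab with ha | ⟨ha_inner, ha⟩ <;>
    rcases color_head_of_arc hf₂ hf₃ hab with hb | ⟨hb_inner, hb⟩
  · omega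
  · omega
  · omega
  · exact absurd hab (hR a b ha_inner hb_inner)

theorem exists_rainbow_path_of_isInner {u : V} (hu : IsInner D u) :
    ∃ x y, D x u ∧ D u y ∧ f x = 1 ∧ f u = 2 ∧ f y = 3 := by
  obtain ⟨⟨x, hxu⟩, ⟨y, huy⟩⟩ := hu
  refine ⟨x, y, hxu, huy, ?_, hf₂ u ⟨⟨x, hxu⟩, y, huy⟩, ?_⟩
  · exact (color_tail_of_arc hf₁ hf₂ hxu).resolve_right
      fun ⟨hx, _⟩ => hR x u hx ⟨⟨x, hxu⟩, y, huy⟩ hxu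
  · exact (color_head_of_arc hf₂ hf₃ huy).resolve_right
      fun ⟨hy, _⟩ => hR u y ⟨⟨x, hxu⟩, y, huy⟩ hy huy

end

end Orientation

open Orientation in
theorem stmt11_general {V : Type*} (G : SimpleGraph V) (D : V → V → Prop)
    (horient₁ : ∀ u v : V, G.Adj u v ↔ (D u v ∨ D v u))
    (hRindep : ∀ u v : V,
      ((∃ x, D x u) ∧ (∃ y, D u y)) → ((∃ x, D x v) ∧ (∃ y, D v y)) →
      ¬ G.Adj u v)
    (f : V → ℕ)
    (hf₁ : ∀ u : V, (¬ ∃ x, D x u) → f u = 1)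
    (hf₂ : ∀ u : V, ((∃ x, D x u) ∧ (∃ y, D u y)) → f u = 2)
    (hf₃ : ∀ u : V, (¬ ∃ y, D u y) → f u = 3) :
    (∀ u v : V, G.Adj u v → f u ≠ f v) ∧
    (∀ u : V, ((∃ x, D x u) ∧ (∃ y, D u y)) →
      ∃ a b c : V, D a b ∧ D b c ∧ (u = a ∨ u = b ∨ u = c) ∧
        f a ≠ f b ∧ f b ≠ f c ∧ f a ≠ f c) := by
  have hR : ∀ u v, IsInner D u → IsInner D v → ¬ D u v := fun u v hu hv huv =>
    hRindep u v hu hv ((horient₁ u v).mpr (Or.inl huv))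
  refine ⟨fun u v huv => ?_, fun u hu => ?_⟩
  · rcases (horient₁ u v).mp huv with h | h
    · exact color_ne_of_arc hR hf₁ hf₂ hf₃ h
    · exact (color_ne_of_arc hR hf₁ hf₂ hf₃ h).symm
  · obtain ⟨x, y, hxu, huy, hx, hu, hy⟩ := exists_rainbow_path_of_isInner hR hf₁ hf₂ hf₃ hu
    exact ⟨x, u, y, hxu, huy, Or.inr (Or.inl rfl), by omega, by omega, by omega⟩

/-- Let `D` be an orientation of a triangle-free graph `G` of chromatic number `3`,
and suppose the set `R` of vertices with positive in-degree and positive out-degree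
is independent in `G`. Then the function `f` assigning color `1` to sources, `2` to
vertices of `R`, and `3` to sinks is a proper `3`-coloring of `G`, and every vertex
of `R` lies on a directed path of order `3` with three distinct colors. -/
theorem stmt11 {V : Type*} [Fintype V] (G : SimpleGraph V) (D : V → V → Prop)
    (horient₁ : ∀ u v : V, G.Adj u v ↔ (D u v ∨ D v u))
    (horient₂ : ∀ u v : V, ¬ (D u v ∧ D v u))
    (htrianglefree : G.CliqueFree 3)
    (hchrom : G.chromaticNumber = 3)
    (hRindep : ∀ u v : V,
      ((∃ x, D x u) ∧ (∃ y, D u y)) → ((∃ x, D x v) ∧ (∃ y, D v y)) →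
      ¬ G.Adj u v)
    (f : V → ℕ)
    (hf₁ : ∀ u : V, (¬ ∃ x, D x u) → f u = 1)
    (hf₂ : ∀ u : V, ((∃ x, D x u) ∧ (∃ y, D u y)) → f u = 2)
    (hf₃ : ∀ u : V, (¬ ∃ y, D u y) → f u = 3) :
    (∀ u v : V, G.Adj u v → f u ≠ f v) ∧
    (∀ u : V, ((∃ x, D x u) ∧ (∃ y, D u y)) →
      ∃ a b c : V, D a b ∧ D b c ∧ (u = a ∨ u = b ∨ u = c) ∧
        f a ≠ f b ∧ f b ≠ f c ∧ f a ≠ f c) :=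
  stmt11_general G D horient₁ hRindep f hf₁ hf₂ hf₃
end
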